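/- There exist a small absolute constant c > 0 and an absolute constant C such that the following holds. Let N ≥ 4 be a dyadic integer, s ≥ 0 an integer, θ_1, …, θ_K s-separated real frequencies, A ⊆ ℂ^K a finite set, and x ∈ ℝ. Then ‖ sup_{a∈A} | Σ_{i=1}^K a_i e(θ_i x) e(θ_i u) | ‖_{L²_u([0, cN^s])} ≤ C N^{s/2} · min{ K^{1/2}, |A|^{1/2} } · sup_{a∈A} ‖a‖_{ℓ²_K}. -/

import Mathlib

open MeasureTheory
open scoped ENNReal NNReal

/-- `e(t) = e^{2πit}`. -/
noncomputable def eC (t : ℝ) : ℂ := Complex.exp (2 * Real.pi * Complex.I * t)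

/-!
The `|A|^{1/2}` bound rests on a large-sieve inequality of Gallagher type: for `δ`-separated
frequencies, `∫₀ᴸ |∑ᵢ bᵢ e(θᵢ u)|² du ≤ (2L + 4/(3Lδ²)) ∑ᵢ |bᵢ|²`. To prove it, dominate
`L · 1_{[0,L]}` by the trapezoid `1_{[-L,0]} ∗ 1_{[0,2L]}`; integrating `|∑ᵢ bᵢ e(θᵢ u)|²` against
the trapezoid gives the Gram form `∑ᵢⱼ bᵢ b̄ⱼ Φ(θᵢ - θⱼ)`, where `Φ` is the trapezoid's Fourier
transform, `|Φ(0)| ≤ 2L²` and `|Φ(ξ)| ≤ (πξ)⁻²`. A Schur test bounds that form, because the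
off-diagonal row sums `∑ⱼ (θᵢ - θⱼ)⁻²` are `O(δ⁻²)` for separated points. Bounding the supremum
over `A` by the sum over `A` then gives the `|A|^{1/2}` factor, and pointwise Cauchy–Schwarz
gives the `K^{1/2}` factor. With `L = N^s` and `δ = 2^{-2s-2}` we have `4Lδ ≥ 1`, so both bounds
are `O(L)`.
-/

open Real Finset intervalIntegral ComplexConjugate

lemma eC_add (s t : ℝ) : eC (s + t) = eC s * eC t := by
  simp only [eC, Complex.ofReal_add, mul_add, Complex.exp_add]

lemma norm_eC (t : ℝ) : ‖eC t‖ = 1 := by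
  simp [eC, Complex.norm_exp]

lemma conj_eC (t : ℝ) : conj (eC t) = eC (-t) := by
  simp only [eC, ← Complex.exp_conj, map_mul, Complex.conj_I, Complex.conj_ofReal, map_ofNat,
    Complex.ofReal_neg]
  ring_nf

@[fun_prop]
lemma continuous_eC : Continuous eC := by
  unfold eC; fun_prop

lemma norm_integral_eC_mul_le (ξ a b : ℝ) : ‖∫ u in a..b, eC (ξ * u)‖ ≤ |b - a| := by
  simpa using norm_integral_le_of_norm_le_const (C := 1) fun u _ => (norm_eC (ξ * u)).le

lemma norm_integral_eC_mul_le_inv {ξ : ℝ} (hξ : ξ ≠ 0) (a b : ℝ) :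
    ‖∫ u in a..b, eC (ξ * u)‖ ≤ (π * |ξ|)⁻¹ := by
  have hc : (2 * π * Complex.I * ξ : ℂ) ≠ 0 := by simp [Real.pi_ne_zero, hξ]
  have hexp : ∀ u : ℝ, eC (ξ * u) = Complex.exp (2 * π * Complex.I * ξ * u) := fun u => by
    simp only [eC, Complex.ofReal_mul]; ring_nf
  simp_rw [hexp, integral_exp_mul_complex hc, ← hexp, norm_div]
  have hnum : ‖eC (ξ * b) - eC (ξ * a)‖ ≤ 2 :=
    (norm_sub_le _ _).trans (by simp only [norm_eC]; norm_num)
  have hden : ‖(2 * π * Complex.I * ξ : ℂ)‖ = 2 * (π * |ξ|) := by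
    simp [abs_of_pos Real.pi_pos]; ring
  rw [hden, div_le_iff₀ (by positivity)]
  field_simp
  linarith

lemma integral_eC_mul_translate (ξ t c : ℝ) :
    ∫ u in t..t + c, eC (ξ * u) = eC (ξ * t) * ∫ v in 0..c, eC (ξ * v) := by
  rw [← intervalIntegral.integral_const_mul]
  simpa [mul_add, eC_add] using
    (intervalIntegral.integral_comp_add_left (fun u => eC (ξ * u)) t (a := 0) (b := c)).symm

lemma mul_integral_le_integral_integral_translate {f : ℝ → ℝ} (hf : Continuous f)
    (hf0 : ∀ u, 0 ≤ f u) {L : ℝ} (hL : 0 ≤ L) :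
    L * ∫ u in 0..L, f u ≤ ∫ t in -L..0, ∫ u in t..t + 2 * L, f u := by
  have hcont : Continuous fun t => ∫ u in t..t + 2 * L, f u := by
    have h : (fun t => ∫ u in t..t + 2 * L, f u) = fun t => ∫ v in 0..2 * L, f (t + v) :=
      funext fun t => by simp [intervalIntegral.integral_comp_add_left]
    rw [h]
    exact continuous_parametric_intervalIntegral_of_continuous' (by fun_prop) _ _
  have hconst : ∫ _ in -L..0, ∫ u in 0..L, f u = L * ∫ u in 0..L, f u := by simp
  rw [← hconst]
  refine integral_mono_on (by linarith) intervalIntegrable_const (hcont.intervalIntegrable _ _)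
    fun t ht => ?_
  exact integral_mono_interval ht.2 hL (by linarith [ht.1]) (.of_forall hf0)
    (hf.intervalIntegrable _ _)

/-- The Fourier transform of the trapezoid `1_{[-L,0]} ∗ 1_{[0,2L]}`, which dominates
`L • 1_{[0,L]}`. -/
noncomputable def trapezoidFourier (L ξ : ℝ) : ℂ :=
  (∫ t in -L..0, eC (ξ * t)) * ∫ v in 0..2 * L, eC (ξ * v)

lemma norm_trapezoidFourier_zero_le {L : ℝ} (hL : 0 ≤ L) :
    ‖trapezoidFourier L 0‖ ≤ 2 * L ^ 2 := by
  rw [trapezoidFourier, norm_mul]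
  calc _ ≤ |0 - -L| * |2 * L - 0| :=
        mul_le_mul (norm_integral_eC_mul_le _ _ _) (norm_integral_eC_mul_le _ _ _)
          (norm_nonneg _) (abs_nonneg _)
    _ = 2 * L ^ 2 := by
        rw [sub_zero, zero_sub, neg_neg, abs_of_nonneg hL, abs_of_nonneg (by linarith)]; ring

lemma norm_trapezoidFourier_le {ξ : ℝ} (hξ : ξ ≠ 0) (L : ℝ) :
    ‖trapezoidFourier L ξ‖ ≤ ((π * ξ) ^ 2)⁻¹ := by
  rw [trapezoidFourier, norm_mul, ← sq_abs, abs_mul, abs_of_pos pi_pos, sq, mul_inv]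
  exact mul_le_mul (norm_integral_eC_mul_le_inv hξ _ _) (norm_integral_eC_mul_le_inv hξ _ _)
    (norm_nonneg _) (by positivity)

lemma hasSum_one_div_int_sq : HasSum (fun d : ℤ => 1 / (d : ℝ) ^ 2) (π ^ 2 / 3) := by
  have h := hasSum_zeta_two.of_nat_of_neg (f := fun d : ℤ => 1 / (d : ℝ) ^ 2)
    (by simpa using hasSum_zeta_two)
  rwa [Int.cast_zero, zero_pow two_ne_zero, div_zero, sub_zero,
    show π ^ 2 / 6 + π ^ 2 / 6 = π ^ 2 / 3 by ring] at h

lemma abs_floor_sub_floor_le {x y : ℝ} (h : 1 ≤ |x - y|) :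
    |((⌊x⌋ - ⌊y⌋ : ℤ) : ℝ)| ≤ 2 * |x - y| := by
  have := Int.floor_le x; have := Int.lt_floor_add_one x
  have := Int.floor_le y; have := Int.lt_floor_add_one y
  push_cast
  rw [abs_le]
  constructor <;> cases abs_cases (x - y) <;> linarith

lemma schur_test {ι : Type*} [Fintype ι] (m : ι → ι → ℝ) {B : ℝ} (hm : ∀ i j, 0 ≤ m i j)
    (hsymm : ∀ i j, m i j = m j i) (hrow : ∀ i, ∑ j, m i j ≤ B) (y : ι → ℝ) :
    ∑ i, ∑ j, m i j * (y i * y j) ≤ B * ∑ i, y i ^ 2 := by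
  have hrowsq : ∑ i, ∑ j, m i j * y i ^ 2 ≤ B * ∑ i, y i ^ 2 := by
    simp_rw [← sum_mul, mul_sum]
    exact sum_le_sum fun i _ => mul_le_mul_of_nonneg_right (hrow i) (sq_nonneg _)
  have hcol : ∑ i, ∑ j, m i j * y j ^ 2 = ∑ i, ∑ j, m i j * y i ^ 2 := by
    rw [sum_comm]; simp_rw [hsymm]
  calc ∑ i, ∑ j, m i j * (y i * y j)
      ≤ ∑ i, ∑ j, (m i j * y i ^ 2 + m i j * y j ^ 2) / 2 :=
        sum_le_sum fun i _ => sum_le_sum fun j _ => by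
          nlinarith [mul_nonneg (hm i j) (sq_nonneg (y i - y j))]
    _ ≤ B * ∑ i, y i ^ 2 := by
      simp_rw [← sum_div, sum_add_distrib, hcol]; linarith

section Separated

variable {ι : Type*} {θ : ι → ℝ} {δ : ℝ}

lemma one_le_abs_div_sub_div_of_separated (hδ : 0 < δ)
    (hsep : Pairwise fun i j => δ ≤ |θ i - θ j|) {i j : ι} (hij : i ≠ j) :
    1 ≤ |θ i / δ - θ j / δ| := by
  rw [← sub_div, abs_div, abs_of_pos hδ, one_le_div hδ]
  exact hsep hij

lemma floor_div_ne_of_separated (hδ : 0 < δ)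
    (hsep : Pairwise fun i j => δ ≤ |θ i - θ j|) {i j : ι} (hij : i ≠ j) :
    ⌊θ i / δ⌋ ≠ ⌊θ j / δ⌋ := fun h =>
  (Int.abs_sub_lt_one_of_floor_eq_floor h).not_ge
    (one_le_abs_div_sub_div_of_separated hδ hsep hij)

/-- Separated points lie in distinct cells `[δn, δ(n + 1))`, so the sum is dominated by
`∑_{n ≠ 0} (δn/2)⁻²`. -/
lemma sum_erase_inv_sq_le_of_separated [Fintype ι] [DecidableEq ι] (hδ : 0 < δ)
    (hsep : Pairwise fun i j => δ ≤ |θ i - θ j|) (i : ι) :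
    ∑ j ∈ univ.erase i, ((θ i - θ j) ^ 2)⁻¹ ≤ 4 * π ^ 2 / (3 * δ ^ 2) := by
  set d : ι → ℤ := fun j => ⌊θ i / δ⌋ - ⌊θ j / δ⌋
  have hd_inj : Set.InjOn d (univ.erase i) := fun j _ k _ hjk => by
    by_contra hne
    exact floor_div_ne_of_separated hδ hsep hne (sub_right_injective hjk)
  have hterm : ∀ j ∈ univ.erase i, ((θ i - θ j) ^ 2)⁻¹ ≤ 4 / δ ^ 2 * (1 / (d j : ℝ) ^ 2) := by
    intro j hj
    have hij := (ne_of_mem_erase hj).symm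
    have hd0 : (d j : ℝ) ≠ 0 := by
      simpa [d, sub_eq_zero] using floor_div_ne_of_separated hδ hsep hij
    have hd := abs_floor_sub_floor_le (one_le_abs_div_sub_div_of_separated hδ hsep hij)
    rw [← sub_div, abs_div, abs_of_pos hδ, mul_div_assoc', le_div_iff₀ hδ] at hd
    calc ((θ i - θ j) ^ 2)⁻¹ ≤ ((δ * |(d j : ℝ)| / 2) ^ 2)⁻¹ := by
          rw [← sq_abs (θ i - θ j)]
          exact inv_anti₀ (by positivity) (pow_le_pow_left₀ (by positivity) (by linarith) 2)
      _ = 4 / δ ^ 2 * (1 / (d j : ℝ) ^ 2) := by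
          rw [div_pow, mul_pow, sq_abs]; field_simp; norm_num
  calc ∑ j ∈ univ.erase i, ((θ i - θ j) ^ 2)⁻¹
      ≤ ∑ j ∈ univ.erase i, 4 / δ ^ 2 * (1 / (d j : ℝ) ^ 2) := sum_le_sum hterm
    _ = 4 / δ ^ 2 * ∑ n ∈ (univ.erase i).image d, 1 / (n : ℝ) ^ 2 := by
      rw [sum_image hd_inj, mul_sum]
    _ ≤ 4 / δ ^ 2 * (π ^ 2 / 3) := by
      gcongr
      exact (hasSum_one_div_int_sq.summable.sum_le_tsum _ fun _ _ => by positivity).trans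
        hasSum_one_div_int_sq.tsum_eq.le
    _ = 4 * π ^ 2 / (3 * δ ^ 2) := by ring

end Separated

section ExpSum

variable {ι : Type*} [Fintype ι]

noncomputable def expSum (b : ι → ℂ) (θ : ι → ℝ) (u : ℝ) : ℂ := ∑ i, b i * eC (θ i * u)

@[fun_prop]
lemma continuous_expSum (b : ι → ℂ) (θ : ι → ℝ) : Continuous (expSum b θ) := by
  unfold expSum; fun_prop

lemma ofReal_norm_expSum_sq (b : ι → ℂ) (θ : ι → ℝ) (u : ℝ) :
    ((‖expSum b θ u‖ ^ 2 : ℝ) : ℂ) = ∑ i, ∑ j, b i * conj (b j) * eC ((θ i - θ j) * u) := by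
  rw [Complex.ofReal_pow, ← Complex.mul_conj', expSum, map_sum, sum_mul_sum]
  refine sum_congr rfl fun i _ => sum_congr rfl fun j _ => ?_
  rw [map_mul, conj_eC, sub_mul, sub_eq_add_neg, eC_add, ← neg_mul]
  ring

lemma integral_sum_sum_mul_eC (d : ι → ι → ℂ) (ξ : ι → ι → ℝ) (a b : ℝ) :
    ∫ t in a..b, ∑ i, ∑ j, d i j * eC (ξ i j * t) =
      ∑ i, ∑ j, d i j * ∫ t in a..b, eC (ξ i j * t) := by
  rw [integral_finsetSum fun i _ => (by fun_prop : Continuous _).intervalIntegrable _ _]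
  refine sum_congr rfl fun i _ => ?_
  rw [integral_finsetSum fun j _ => (by fun_prop : Continuous _).intervalIntegrable _ _]
  simp only [intervalIntegral.integral_const_mul]

lemma ofReal_integral_trapezoid_norm_expSum_sq (b : ι → ℂ) (θ : ι → ℝ) (L : ℝ) :
    ((∫ t in -L..0, ∫ u in t..t + 2 * L, ‖expSum b θ u‖ ^ 2 : ℝ) : ℂ) =
      ∑ i, ∑ j, b i * conj (b j) * trapezoidFourier L (θ i - θ j) := by
  have hinner : ∀ t : ℝ, ((∫ u in t..t + 2 * L, ‖expSum b θ u‖ ^ 2 : ℝ) : ℂ) =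
      ∑ i, ∑ j, (b i * conj (b j) * ∫ v in 0..2 * L, eC ((θ i - θ j) * v)) *
        eC ((θ i - θ j) * t) := fun t => by
    rw [← intervalIntegral.integral_ofReal]
    simp_rw [ofReal_norm_expSum_sq, integral_sum_sum_mul_eC, integral_eC_mul_translate]
    simp only [mul_comm, mul_left_comm]
  rw [← intervalIntegral.integral_ofReal]
  simp_rw [hinner, integral_sum_sum_mul_eC, trapezoidFourier]
  simp only [mul_comm, mul_left_comm]

lemma norm_sum_trapezoidFourier_le {θ : ι → ℝ} {δ L : ℝ} (hδ : 0 < δ) (hL : 0 ≤ L)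
    (hsep : Pairwise fun i j => δ ≤ |θ i - θ j|) (b : ι → ℂ) :
    ‖∑ i, ∑ j, b i * conj (b j) * trapezoidFourier L (θ i - θ j)‖ ≤
      (2 * L ^ 2 + 4 / (3 * δ ^ 2)) * ∑ i, ‖b i‖ ^ 2 := by
  classical
  set m : ι → ι → ℝ := fun i j => if i = j then 2 * L ^ 2 else ((π * (θ i - θ j)) ^ 2)⁻¹
  have hm : ∀ i j, ‖trapezoidFourier L (θ i - θ j)‖ ≤ m i j := fun i j => by
    by_cases hij : i = j
    · simpa [m, hij] using norm_trapezoidFourier_zero_le hL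
    · have hθ : θ i - θ j ≠ 0 := fun h => by
        have : δ ≤ |θ i - θ j| := hsep hij
        rw [h, abs_zero] at this; linarith
      simpa [m, hij] using norm_trapezoidFourier_le hθ L
  have hsymm : ∀ i j, m i j = m j i := fun i j => by
    simp only [m, eq_comm (a := i), ← neg_sub (θ j), mul_neg, neg_sq]
  have hrow : ∀ i, ∑ j, m i j ≤ 2 * L ^ 2 + 4 / (3 * δ ^ 2) := fun i => by
    have hoff : ∑ j ∈ univ.erase i, m i j =
        (π ^ 2)⁻¹ * ∑ j ∈ univ.erase i, ((θ i - θ j) ^ 2)⁻¹ := by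
      rw [mul_sum]
      refine sum_congr rfl fun j hj => ?_
      simp only [m, if_neg (ne_of_mem_erase hj).symm, mul_pow, mul_inv]
    rw [← add_sum_erase _ _ (mem_univ i), hoff]
    simp only [m, if_pos rfl]
    calc _ ≤ 2 * L ^ 2 + (π ^ 2)⁻¹ * (4 * π ^ 2 / (3 * δ ^ 2)) := by
          gcongr; exact sum_erase_inv_sq_le_of_separated hδ hsep i
      _ = _ := by field_simp
  calc _ ≤ ∑ i, ∑ j, m i j * (‖b i‖ * ‖b j‖) := by
        refine (norm_sum_le _ _).trans (sum_le_sum fun i _ => (norm_sum_le _ _).trans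
          (sum_le_sum fun j _ => ?_))
        rw [norm_mul, norm_mul, Complex.norm_conj, mul_comm]
        exact mul_le_mul_of_nonneg_right (hm i j) (by positivity)
    _ ≤ _ := schur_test m (fun i j => (norm_nonneg _).trans (hm i j)) hsymm hrow _

theorem integral_norm_expSum_sq_le {θ : ι → ℝ} {δ L : ℝ} (hδ : 0 < δ) (hL : 0 < L)
    (hsep : Pairwise fun i j => δ ≤ |θ i - θ j|) (b : ι → ℂ) :
    ∫ u in 0..L, ‖expSum b θ u‖ ^ 2 ≤ (2 * L + 4 / (3 * L * δ ^ 2)) * ∑ i, ‖b i‖ ^ 2 := by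
  refine le_of_mul_le_mul_left ?_ hL
  calc L * ∫ u in 0..L, ‖expSum b θ u‖ ^ 2
      ≤ ∫ t in -L..0, ∫ u in t..t + 2 * L, ‖expSum b θ u‖ ^ 2 :=
        mul_integral_le_integral_integral_translate (by fun_prop) (fun _ => sq_nonneg _) hL.le
    _ ≤ ‖∑ i, ∑ j, b i * conj (b j) * trapezoidFourier L (θ i - θ j)‖ := by
        rw [← ofReal_integral_trapezoid_norm_expSum_sq, Complex.norm_real, Real.norm_eq_abs]
        exact le_abs_self _
    _ ≤ (2 * L ^ 2 + 4 / (3 * δ ^ 2)) * ∑ i, ‖b i‖ ^ 2 :=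
        norm_sum_trapezoidFourier_le hδ hL.le hsep b
    _ = L * ((2 * L + 4 / (3 * L * δ ^ 2)) * ∑ i, ‖b i‖ ^ 2) := by field_simp

theorem integral_norm_expSum_sq_le_of_one_le {θ : ι → ℝ} {δ L : ℝ} (hδ : 0 < δ)
    (hL : 1 ≤ 4 * L * δ) (hsep : Pairwise fun i j => δ ≤ |θ i - θ j|) (b : ι → ℂ) :
    ∫ u in 0..L, ‖expSum b θ u‖ ^ 2 ≤ 24 * L * ∑ i, ‖b i‖ ^ 2 := by
  have hL0 : 0 < L := by by_contra! h; nlinarith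
  refine (integral_norm_expSum_sq_le hδ hL0 hsep b).trans
    (mul_le_mul_of_nonneg_right ?_ (by positivity))
  have : 4 / (3 * L * δ ^ 2) ≤ 22 * L := by
    rw [div_le_iff₀ (by positivity)]; nlinarith
  linarith

lemma norm_expSum_sq_le (b : ι → ℂ) (θ : ι → ℝ) (u : ℝ) :
    ‖expSum b θ u‖ ^ 2 ≤ Fintype.card ι * ∑ i, ‖b i‖ ^ 2 := by
  have h : ‖expSum b θ u‖ ≤ ∑ i, ‖b i‖ :=
    (norm_sum_le _ _).trans_eq (by simp [norm_eC])
  exact (pow_le_pow_left₀ (norm_nonneg _) h 2).trans sq_sum_le_card_mul_sum_sq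

end ExpSum

lemma ENNReal.iSup_mem_sq_le_sum_sq {κ : Type*} (A : Finset κ) (f : κ → ℝ≥0∞) :
    (⨆ a ∈ A, f a) ^ 2 ≤ ∑ a ∈ A, f a ^ 2 := by
  rw [ENNReal.iSup₂_pow_of_ne_zero _ two_ne_zero]
  exact iSup₂_le fun a ha => single_le_sum (f := fun a => f a ^ 2) (fun _ _ => zero_le) ha

lemma ENNReal.rpow_one_half_le_ofReal {X : ℝ≥0∞} {R : ℝ} (hR : 0 ≤ R)
    (h : X ≤ ENNReal.ofReal (R ^ 2)) : X ^ (1 / 2 : ℝ) ≤ ENNReal.ofReal R := by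
  calc X ^ (1 / 2 : ℝ) ≤ ENNReal.ofReal (R ^ 2) ^ (1 / 2 : ℝ) :=
        ENNReal.rpow_le_rpow h (by norm_num)
    _ = ENNReal.ofReal R := by
      rw [ENNReal.ofReal_rpow_of_nonneg (by positivity) (by norm_num), ← Real.sqrt_eq_rpow,
        Real.sqrt_sq hR]

lemma lintegral_Icc_enorm_sq_eq {g : ℝ → ℂ} (hg : Continuous g) {L : ℝ} (hL : 0 ≤ L) :
    ∫⁻ u in Set.Icc 0 L, ‖g u‖ₑ ^ 2 = ENNReal.ofReal (∫ u in 0..L, ‖g u‖ ^ 2) := by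
  rw [intervalIntegral.integral_of_le hL, ← integral_Icc_eq_integral_Ioc,
    ofReal_integral_eq_lintegral_ofReal
      ((by fun_prop : Continuous fun u => ‖g u‖ ^ 2).integrableOn_Icc)
      (.of_forall fun _ => sq_nonneg _)]
  simp_rw [ENNReal.ofReal_pow (norm_nonneg _), ofReal_norm]

section MaximalExpSum

variable {ι κ : Type*} [Fintype ι] {θ : ι → ℝ} {L M : ℝ}

lemma lintegral_iSup_enorm_expSum_sq_le_card_index (A : Finset κ) (b : κ → ι → ℂ)
    (hb : ∀ a ∈ A, ∑ i, ‖b a i‖ ^ 2 ≤ M ^ 2) :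
    ∫⁻ u in Set.Icc 0 L, (⨆ a ∈ A, ‖expSum (b a) θ u‖ₑ) ^ 2 ≤
      ENNReal.ofReal (Fintype.card ι * M ^ 2 * L) := by
  have hpt : ∀ u, (⨆ a ∈ A, ‖expSum (b a) θ u‖ₑ) ^ 2 ≤
      ENNReal.ofReal (Fintype.card ι * M ^ 2) := fun u => by
    rw [ENNReal.iSup₂_pow_of_ne_zero _ two_ne_zero]
    refine iSup₂_le fun a ha => ?_
    rw [← ofReal_norm, ← ENNReal.ofReal_pow (norm_nonneg _)]
    exact ENNReal.ofReal_le_ofReal ((norm_expSum_sq_le _ _ _).trans (by gcongr; exact hb a ha))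
  calc _ ≤ ∫⁻ _ in Set.Icc 0 L, ENNReal.ofReal (Fintype.card ι * M ^ 2) := lintegral_mono hpt
    _ = _ := by
      rw [setLIntegral_const, Real.volume_Icc, sub_zero, ← ENNReal.ofReal_mul (by positivity)]

lemma lintegral_iSup_enorm_expSum_sq_le_card {δ : ℝ} (hδ : 0 < δ) (hL : 1 ≤ 4 * L * δ)
    (hsep : Pairwise fun i j => δ ≤ |θ i - θ j|) (A : Finset κ) (b : κ → ι → ℂ)
    (hb : ∀ a ∈ A, ∑ i, ‖b a i‖ ^ 2 ≤ M ^ 2) :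
    ∫⁻ u in Set.Icc 0 L, (⨆ a ∈ A, ‖expSum (b a) θ u‖ₑ) ^ 2 ≤
      ENNReal.ofReal (#A * (24 * L * M ^ 2)) := by
  have hL0 : 0 ≤ L := by by_contra! h; nlinarith
  calc _ ≤ ∫⁻ u in Set.Icc 0 L, ∑ a ∈ A, ‖expSum (b a) θ u‖ₑ ^ 2 :=
        lintegral_mono fun u => ENNReal.iSup_mem_sq_le_sum_sq _ _
    _ = ∑ a ∈ A, ENNReal.ofReal (∫ u in 0..L, ‖expSum (b a) θ u‖ ^ 2) := by
        rw [lintegral_finsetSum' _ fun a _ => by fun_prop]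
        exact sum_congr rfl fun a _ => lintegral_Icc_enorm_sq_eq (continuous_expSum _ _) hL0
    _ ≤ ∑ a ∈ A, ENNReal.ofReal (24 * L * M ^ 2) := sum_le_sum fun a ha =>
        ENNReal.ofReal_le_ofReal ((integral_norm_expSum_sq_le_of_one_le hδ hL hsep _).trans
          (by gcongr; exact hb a ha))
    _ = _ := by
        rw [sum_const, nsmul_eq_mul, ← ENNReal.ofReal_natCast, ← ENNReal.ofReal_mul (by positivity)]

theorem lintegral_iSup_enorm_expSum_sq_le {δ : ℝ} (hδ : 0 < δ) (hL : 1 ≤ 4 * L * δ)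
    (hsep : Pairwise fun i j => δ ≤ |θ i - θ j|) (A : Finset κ) (b : κ → ι → ℂ)
    (hb : ∀ a ∈ A, ∑ i, ‖b a i‖ ^ 2 ≤ M ^ 2) :
    ∫⁻ u in Set.Icc 0 L, (⨆ a ∈ A, ‖expSum (b a) θ u‖ₑ) ^ 2 ≤
      ENNReal.ofReal (25 * L * M ^ 2 * min (Fintype.card ι : ℝ) #A) := by
  have hLM : 0 ≤ L * M ^ 2 := mul_nonneg (by by_contra! h; nlinarith) (sq_nonneg M)
  refine (le_min (lintegral_iSup_enorm_expSum_sq_le_card_index A b hb)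
    (lintegral_iSup_enorm_expSum_sq_le_card hδ hL hsep A b hb)).trans ?_
  rw [← ENNReal.ofReal_min, mul_min_of_nonneg _ _ (by linarith)]
  exact ENNReal.ofReal_le_ofReal (min_le_min
    (by nlinarith [mul_nonneg hLM (Nat.cast_nonneg (α := ℝ) (Fintype.card ι))])
    (by nlinarith [mul_nonneg hLM (Nat.cast_nonneg (α := ℝ) #A)]))

end MaximalExpSum

lemma one_le_four_mul_pow_mul_two_zpow {N : ℝ} (hN : 4 ≤ N) (s : ℕ) :
    1 ≤ 4 * N ^ s * (2 : ℝ) ^ (-(2 * (s : ℤ)) - 2) := by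
  have h : (2 : ℝ) ^ (-(2 * (s : ℤ)) - 2) = ((4 : ℝ) ^ s)⁻¹ / 4 := by
    rw [zpow_sub₀ two_ne_zero, zpow_neg, zpow_mul]; norm_num
  rw [h, show 4 * N ^ s * ((4 ^ s)⁻¹ / 4) = N ^ s / 4 ^ s by ring, one_le_div (by positivity)]
  exact pow_le_pow_left₀ (by norm_num) hN s

lemma le_ciSup_mem {κ : Type*} {A : Finset κ} (f : κ → ℝ) {a : κ} (ha : a ∈ A) :
    f a ≤ ⨆ b ∈ A, f b := by
  refine le_ciSup₂ (f := fun b (_ : b ∈ A) => f b)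
    ((A.finite_toSet.image f).bddAbove.mono ?_) a ha
  rintro _ ⟨_, ⟨b, rfl⟩, ⟨hb, rfl⟩⟩
  exact ⟨b, hb, rfl⟩

/-- The maximal exponential-sum lemma on `ℓ²_K`: for `s`-separated frequencies and a
finite set `A ⊆ ℂ^K`,
`‖sup_{a∈A} |Σ_i a_i e(θ_i x) e(θ_i u)|‖_{L²_u[0,cN^s]}
  ≲ N^{s/2} min{K^{1/2}, |A|^{1/2}} sup_{a∈A} ‖a‖_{ℓ²_K}`. -/
theorem maximal_exponential_sum_lemma :
    ∃ c C : ℝ, 0 < c ∧ 0 < C ∧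
    ∀ N : ℕ, (∃ k, N = 2^k) → 4 ≤ N → ∀ s : ℕ, ∀ K : ℕ,
    ∀ θ : Fin K → ℝ, (∀ i j, i ≠ j → (2:ℝ) ^ (-(2*(s:ℤ)) - 2) < |θ i - θ j|) →
    ∀ A : Finset (EuclideanSpace ℂ (Fin K)), ∀ x : ℝ,
    (∫⁻ u in Set.Icc (0:ℝ) (c * (N:ℝ)^(s:ℕ)),
        (⨆ a ∈ A, (‖∑ i, a i * eC (θ i * x) * eC (θ i * u)‖₊ : ℝ≥0∞)) ^ (2:ℝ))
      ^ ((1:ℝ)/2)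
      ≤ ENNReal.ofReal (C * (N:ℝ) ^ ((s:ℝ)/2) *
          min (Real.sqrt K) (Real.sqrt A.card) * (⨆ a ∈ A, ‖a‖)) := by
  refine ⟨1, 5, one_pos, by norm_num, fun N _ hN s K θ hθ A x => ?_⟩
  have hN : (4 : ℝ) ≤ N := by exact_mod_cast hN
  set M : ℝ := ⨆ a ∈ A, ‖a‖
  set b : EuclideanSpace ℂ (Fin K) → Fin K → ℂ := fun a i => a i * eC (θ i * x)
  have hb : ∀ a ∈ A, ∑ i, ‖b a i‖ ^ 2 ≤ M ^ 2 := fun a ha => by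
    simp only [b, norm_mul, norm_eC, mul_one, ← EuclideanSpace.norm_sq_eq]
    exact pow_le_pow_left₀ (norm_nonneg _) (le_ciSup_mem _ ha) 2
  have hM : 0 ≤ M := Real.iSup_nonneg fun a => Real.iSup_nonneg fun _ => norm_nonneg a
  have hbound := lintegral_iSup_enorm_expSum_sq_le (by positivity)
    (one_le_four_mul_pow_mul_two_zpow hN s) (fun i j hij => (hθ i j hij).le) A b hb
  rw [one_mul]
  simp_rw [← enorm_eq_nnnorm, ENNReal.rpow_two]
  refine ENNReal.rpow_one_half_le_ofReal (by positivity) (hbound.trans_eq ?_)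
  have hsqrtN : ((N : ℝ) ^ ((s : ℝ) / 2)) ^ 2 = (N : ℝ) ^ s := by
    rw [← Real.rpow_natCast, ← Real.rpow_mul (by positivity)]; norm_num
  have hsqrtmin : min √(K : ℝ) √(#A : ℝ) ^ 2 = min (K : ℝ) #A := by
    rw [← Real.sqrt_monotone.map_min, Real.sq_sqrt (by positivity)]
  rw [Fintype.card_fin, mul_pow, mul_pow, mul_pow, hsqrtN, hsqrtmin]
  congr 1
  ring
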